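/- arXiv:2103.00066 — 5 statements merged into one kernel-verified Lean document; each statement's English description precedes it below -/
import Mathlib

section
/- Let G be a connected graph on n₀ vertices that contains a triangle-factor and has exactly (4/3)·n₀ − 1 edges. Then every cycle in G is one of the n₀/3 triangles of the triangle-factor; in particular G contains no cycle of length at least 4. -/
/-!
Deleting one edge from every triangle of a triangle-factor keeps a graph connected, so a connected
graph on `3k` vertices with a triangle-factor has at least `4k - 1` edges. If a cycle of `G` used an
edge joining two different triangles of the factor, that edge would not be a bridge: deleting it
would leave a connected graph with the same triangle-factor and only `4k - 2` edges. So every cycle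
runs inside a single triangle.
-/

open SimpleGraph Finset

def IsTriangleFactor {V : Type*} [DecidableEq V] (G : SimpleGraph V) (P : Finset (Finset V)) : Prop :=
  (∀ t ∈ P, G.IsNClique 3 t) ∧ (∀ v : V, ∃! t, t ∈ P ∧ v ∈ t)

namespace SimpleGraph

variable {V : Type*} {G H : SimpleGraph V}

lemma Reachable.of_forall_adj_reachable (h : ∀ x y, G.Adj x y → H.Reachable x y) {u v : V}
    (huv : G.Reachable u v) : H.Reachable u v := by
  obtain ⟨w⟩ := huv
  induction w with
  | nil => rfl
  | cons hadj _ ih => exact (h _ _ hadj).trans ih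

lemma Connected.deleteEdges_of_forall_reachable (hG : G.Connected) (s : Set (Sym2 V))
    (hs : ∀ x y, G.Adj x y → s(x, y) ∈ s → (G.deleteEdges s).Reachable x y) :
    (G.deleteEdges s).Connected := by
  have := hG.nonempty
  refine ⟨fun u v => (hG.preconnected u v).of_forall_adj_reachable fun x y hxy => ?_⟩
  by_cases hxys : s(x, y) ∈ s
  · exact hs x y hxy hxys
  · exact Adj.reachable (deleteEdges_adj.2 ⟨hxy, hxys⟩)

lemma Walk.forall_mem_support_of_closed {s : Set V} {u v : V} (w : G.Walk u v) (hu : u ∈ s)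
    (hs : ∀ x y, s(x, y) ∈ w.edges → x ∈ s → y ∈ s) : ∀ x ∈ w.support, x ∈ s := by
  induction w with
  | nil => simpa using hu
  | @cons x y _ hadj w ih =>
    have hnext := hs x y (by simp) hu
    simp only [Walk.support_cons, List.mem_cons, forall_eq_or_imp]
    exact ⟨hu, ih hnext fun x y hxy => hs x y (by simp [hxy])⟩

lemma Walk.IsCycle.card_toFinset_support [DecidableEq V] {u : V} {c : G.Walk u u}
    (hc : c.IsCycle) : #c.support.toFinset = c.length := by
  rw [← c.cons_tail_support, List.toFinset_cons,
    insert_eq_of_mem (List.mem_toFinset.2 (c.end_mem_tail_support hc.not_nil)),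
    List.toFinset_card_of_nodup hc.support_nodup, List.length_tail, c.length_support]
  rfl

end SimpleGraph

namespace IsTriangleFactor

variable {V : Type*} [DecidableEq V] {G : SimpleGraph V} {P : Finset (Finset V)}

lemma eq_of_mem (hP : IsTriangleFactor G P) {t u : Finset V} {x : V} (ht : t ∈ P) (hu : u ∈ P)
    (hxt : x ∈ t) (hxu : x ∈ u) : t = u :=
  (hP.2 x).unique ⟨ht, hxt⟩ ⟨hu, hxu⟩

lemma card_eq [Fintype V] (hP : IsTriangleFactor G P) : Fintype.card V = 3 * #P := by
  have hcover : P.biUnion id = univ := eq_univ_of_forall fun v => by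
    obtain ⟨t, ht, hvt⟩ := (hP.2 v).exists
    exact mem_biUnion.2 ⟨t, ht, hvt⟩
  have hdisj : (P : Set (Finset V)).PairwiseDisjoint id := fun t ht u hu htu =>
    disjoint_left.2 fun _ hxt hxu => htu (hP.eq_of_mem ht hu hxt hxu)
  rw [← card_univ, ← hcover, card_biUnion hdisj]
  exact (sum_const_nat fun t ht => (hP.1 t ht).card_eq).trans (mul_comm _ _)

lemma deleteEdges_singleton (hP : IsTriangleFactor G P) {x y : V}
    (hxy : ∀ t ∈ P, x ∈ t → y ∉ t) : IsTriangleFactor (G.deleteEdges {s(x, y)}) P := by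
  refine ⟨fun t ht => ⟨fun u hu w hw huw => ?_, (hP.1 t ht).card_eq⟩, hP.2⟩
  refine deleteEdges_adj.2 ⟨(hP.1 t ht).isClique hu hw huw, fun he => ?_⟩
  rcases Sym2.eq_iff.1 (Set.mem_singleton_iff.1 he) with ⟨rfl, rfl⟩ | ⟨rfl, rfl⟩
  exacts [hxy t ht hu hw, hxy t ht hw hu]

lemma exists_connected_deleteEdges (hP : IsTriangleFactor G P) (hG : G.Connected) :
    ∃ D : Finset (Sym2 V), #D = #P ∧ ↑D ⊆ G.edgeSet ∧ (G.deleteEdges D).Connected := by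
  choose a b c hab hac hbc hPabc using fun t : P => is3Clique_iff.1 (hP.1 t t.2)
  set D : Finset (Sym2 V) := univ.image fun t => s(a t, b t)
  have hmem : ∀ t : P, a t ∈ (t : Finset V) ∧ b t ∈ (t : Finset V) ∧ c t ∈ (t : Finset V) :=
    fun t => by rw [hPabc t]; simp
  have hmem_edge : ∀ t : P, ∀ x ∈ s(a t, b t), x ∈ (t : Finset V) := fun t x hx => by
    rcases Sym2.mem_iff.1 hx with rfl | rfl
    exacts [(hmem t).1, (hmem t).2.1]
  have hD_unique : ∀ t : P, ∀ x ∈ (t : Finset V), ∀ y, s(x, y) ∈ D → s(x, y) = s(a t, b t) := by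
    intro t x hxt y hxy
    obtain ⟨u, -, hu⟩ := mem_image.1 hxy
    obtain rfl : u = t :=
      Subtype.ext (hP.eq_of_mem u.2 t.2 (hmem_edge u x (hu ▸ Sym2.mem_mk_left x y)) hxt)
    exact hu.symm
  have hinj : Function.Injective fun t : P => s(a t, b t) :=
    fun t u (htu : s(a t, b t) = s(a u, b u)) =>
      Subtype.ext (hP.eq_of_mem t.2 u.2 (hmem t).1 (hmem_edge u _ (htu ▸ Sym2.mem_mk_left _ _)))
  have hdetour : ∀ t : P, (G.deleteEdges D).Reachable (a t) (b t) := fun t =>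
    (Adj.reachable (deleteEdges_adj.2 ⟨hac t, fun h => (hbc t).ne
      (Sym2.congr_right.1 (hD_unique t _ (hmem t).1 _ h)).symm⟩)).trans
    (Adj.reachable (deleteEdges_adj.2 ⟨(hbc t).symm, fun h => (hac t).ne
      (Sym2.congr_left.1 (hD_unique t _ (hmem t).2.2 _ h)).symm⟩))
  refine ⟨D, by rw [card_image_of_injective _ hinj, card_univ, Fintype.card_coe], ?_, ?_⟩
  · intro e he
    obtain ⟨t, -, rfl⟩ := mem_image.1 he
    exact hab t
  · refine hG.deleteEdges_of_forall_reachable _ fun x y _ hxy => ?_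
    obtain ⟨t, -, hst⟩ := mem_image.1 hxy
    rcases Sym2.eq_iff.1 hst with ⟨rfl, rfl⟩ | ⟨rfl, rfl⟩
    exacts [hdetour t, (hdetour t).symm]

lemma four_mul_card_le_ncard_edgeSet_add_one [Fintype V] (hP : IsTriangleFactor G P)
    (hG : G.Connected) : 4 * #P ≤ G.edgeSet.ncard + 1 := by
  obtain ⟨D, hD_card, hD_sub, hconn⟩ := hP.exists_connected_deleteEdges hG
  have hcount := hconn.card_vert_le_card_edgeSet_add_one
  rw [edgeSet_deleteEdges, Nat.card_coe_set_eq, Set.ncard_sdiff' hD_sub, Set.ncard_coe_finset,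
    hD_card, Nat.card_eq_fintype_card, hP.card_eq] at hcount
  omega

end IsTriangleFactor

theorem stmt1 {V : Type*} [Fintype V] [DecidableEq V] (G : SimpleGraph V) [DecidableRel G.Adj]
    (n₀ : ℕ) (hn : Fintype.card V = n₀) (hconn : G.Connected)
    (P : Finset (Finset V)) (hP : IsTriangleFactor G P)
    (hE : 3 * G.edgeFinset.card + 3 = 4 * n₀) :
    ∀ (v : V) (c : G.Walk v v), c.IsCycle →
      c.support.toFinset ∈ P ∧ c.length = 3 := by
  intro v c hc
  have hinside : ∀ x y, s(x, y) ∈ c.edges → ∃ t ∈ P, x ∈ t ∧ y ∈ t := by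
    intro x y hxy
    by_contra! hcross
    have hconn' := hconn.connected_delete_edge_of_not_isBridge fun hb =>
      hb.notMem_edges_of_isCycle hc hxy
    have hcount := (hP.deleteEdges_singleton hcross).four_mul_card_le_ncard_edgeSet_add_one hconn'
    rw [edgeSet_deleteEdges, Set.ncard_sdiff_singleton_of_mem (c.edges_subset_edgeSet hxy),
      ← coe_edgeFinset, Set.ncard_coe_finset] at hcount
    have := hP.card_eq
    omega
  obtain ⟨t, ht, hvt⟩ := (hP.2 v).exists
  have hsub : c.support.toFinset ⊆ t := fun x hx =>
    c.forall_mem_support_of_closed (s := (t : Set V)) hvt (fun x y hxy hxt => by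
      obtain ⟨u, hu, hxu, hyu⟩ := hinside x y hxy
      exact hP.eq_of_mem hu ht hxu hxt ▸ hyu) x (List.mem_toFinset.1 hx)
  have hcard := (hP.1 t ht).card_eq
  have hlen : c.length = 3 :=
    le_antisymm (hc.card_toFinset_support ▸ hcard ▸ card_le_card hsub) hc.three_le_length
  refine ⟨eq_of_subset_of_card_le hsub ?_ ▸ ht, hlen⟩
  rw [hc.card_toFinset_support, hlen, hcard]
end

section
/- Let G be a connected graph on n₀ vertices with exactly (4/3)·n₀ − 1 edges that contains a triangle-factor. Then the triangle-factor of G is unique. -/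
open SimpleGraph Finset


lemma conn_card_le' {V : Type*} [Fintype V] (G : SimpleGraph V) [Fintype G.edgeSet]
    (h : G.Connected) : Fintype.card V ≤ G.edgeFinset.card + 1 := by
  classical
  obtain ⟨r⟩ := h.nonempty
  have key : ∀ v : V, ∃ x : V, v = r ∨ (G.Adj v x ∧ G.dist x r < G.dist v r) := by
    intro v
    by_cases hv : v = r
    · exact ⟨r, Or.inl hv⟩
    obtain ⟨w, hw⟩ := h.exists_walk_length_eq_dist v r
    cases w with
    | nil => exact absurd rfl hv
    | @cons _ x _ ha p =>
      refine ⟨x, Or.inr ⟨ha, ?_⟩⟩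
      have h1 : G.dist x r ≤ p.length := G.dist_le p
      have h2 : p.length + 1 = G.dist v r := by simpa using hw
      omega
  choose x hx using key
  have hinj : Set.InjOn (fun v => s(v, x v)) ↑(Finset.univ.erase r) := by
    intro a ha b hb hab
    simp only [Finset.coe_erase, Set.mem_diff, Set.mem_singleton_iff] at ha hb
    simp only [Sym2.eq_iff] at hab
    rcases hab with ⟨h1, h2⟩ | ⟨h1, h2⟩
    · exact h1
    · exfalso
      rcases hx a with h | ⟨_, hda⟩; · exact ha.2 h
      rcases hx b with h | ⟨_, hdb⟩; · exact hb.2 h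
      rw [h2] at hda; rw [← h1] at hdb
      omega
  have hmap : ∀ v ∈ Finset.univ.erase r, s(v, x v) ∈ G.edgeFinset := by
    intro v hv
    rcases hx v with h | ⟨hadj, _⟩
    · exact absurd h (Finset.ne_of_mem_erase hv)
    · simpa [SimpleGraph.mem_edgeFinset] using hadj
  have := Finset.card_le_card_of_injOn _ hmap hinj
  rw [Finset.card_erase_of_mem (Finset.mem_univ r), Finset.card_univ] at this
  omega


lemma factor_card' {V : Type*} [Fintype V] [DecidableEq V] (P : Finset (Finset V))
    (hcard : ∀ t ∈ P, t.card = 3) (hpart : ∀ v : V, ∃! t, t ∈ P ∧ v ∈ t) :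
    3 * P.card = Fintype.card V := by
  classical
  have huniv : (Finset.univ : Finset V) = P.biUnion id := by
    ext v
    simp only [Finset.mem_univ, true_iff, Finset.mem_biUnion, id]
    obtain ⟨t, ⟨ht, hv⟩, -⟩ := hpart v
    exact ⟨t, ht, hv⟩
  have hdisj : ∀ t ∈ P, ∀ s ∈ P, t ≠ s → Disjoint (id t) (id s) := by
    intro t ht s hs hne
    rw [Finset.disjoint_left]
    intro v hvt hvs
    exact hne (((hpart v).unique ⟨ht, hvt⟩ ⟨hs, hvs⟩))
  rw [← Finset.card_univ, huniv, Finset.card_biUnion hdisj]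
  rw [Finset.sum_congr rfl (fun t ht => by simpa using hcard t ht), Finset.sum_const, smul_eq_mul]
  ring

lemma key_count' {V : Type*} [Fintype V] [DecidableEq V] (G : SimpleGraph V)
    [Fintype G.edgeSet] (hc : G.Connected) (P : Finset (Finset V))
    (hclique : ∀ t ∈ P, G.IsNClique 3 t)
    (hpart : ∀ v : V, ∃! t, t ∈ P ∧ v ∈ t) :
    4 * P.card ≤ G.edgeFinset.card + 1 := by
  classical
  choose f hfP hfv using fun v => (hpart v).exists
  have huniq : ∀ {v : V} {t : Finset V}, t ∈ P → v ∈ t → t = f v :=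
    fun {v t} ht hv => (hpart v).unique ⟨ht, hv⟩ ⟨hfP v, hfv v⟩
  set F : V → {t // t ∈ P} := fun v => ⟨f v, hfP v⟩ with hF
  set H : SimpleGraph {t // t ∈ P} :=
    SimpleGraph.fromRel (fun T T' => ∃ u v : V, u ∈ T.1 ∧ v ∈ T'.1 ∧ G.Adj u v) with hH
  have hFmem : ∀ (v : V) (T : {t // t ∈ P}), v ∈ T.1 → F v = T := by
    intro v T hv
    exact Subtype.ext (huniq T.2 hv).symm
  -- reachability lifts
  have hlift : ∀ (a b : V), G.Adj a b → H.Reachable (F a) (F b) := by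
    intro a b hab
    by_cases h : F a = F b
    · rw [h]
    · exact (SimpleGraph.Adj.reachable ⟨h, Or.inl ⟨a, b, hfv a, hfv b, hab⟩⟩)
  have hwalk : ∀ (a b : V), G.Reachable a b → H.Reachable (F a) (F b) := by
    intro a b hr
    obtain ⟨w⟩ := hr
    induction w with
    | nil => exact Reachable.refl _
    | cons ha p ih => exact (hlift _ _ ha).trans ih
  have hne3 : ∀ t ∈ P, t.Nonempty := by
    intro t ht
    have := (hclique t ht).2
    exact Finset.card_pos.mp (by omega)
  have hHconn : H.Connected := by
    have hnonempty : Nonempty {t // t ∈ P} := by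
      obtain ⟨r⟩ := hc.nonempty
      exact ⟨⟨f r, hfP r⟩⟩
    haveI := hnonempty
    refine SimpleGraph.Connected.mk fun T T' => ?_
    obtain ⟨u, hu⟩ := hne3 T.1 T.2
    obtain ⟨v, hv⟩ := hne3 T'.1 T'.2
    have := hwalk u v (hc u v)
    rwa [hFmem u T hu, hFmem v T' hv] at this
  have bound1 : P.card ≤ H.edgeFinset.card + 1 := by
    have := conn_card_le' H hHconn
    rwa [Fintype.card_coe] at this
  set X : Finset (Sym2 V) := G.edgeFinset.filter (fun e => ¬ (Sym2.map F e).IsDiag) with hX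
  set Fs : Finset (Sym2 V) := G.edgeFinset.filter (fun e => (Sym2.map F e).IsDiag) with hFs
  have hsplit : Fs.card + X.card = G.edgeFinset.card :=
    Finset.card_filter_add_card_filter_not _
  -- H edges come from X
  have hHX : H.edgeFinset ⊆ X.image (Sym2.map F) := by
    intro e he
    induction e using Sym2.ind with
    | _ T T' =>
      rw [SimpleGraph.mem_edgeFinset, SimpleGraph.mem_edgeSet] at he
      obtain ⟨hne, h'⟩ := he
      have : ∃ u v : V, u ∈ T.1 ∧ v ∈ T'.1 ∧ G.Adj u v := by
        rcases h' with h' | ⟨u, v, hu, hv, huv⟩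
        · exact h'
        · exact ⟨v, u, hv, hu, huv.symm⟩
      obtain ⟨u, v, hu, hv, huv⟩ := this
      rw [Finset.mem_image]
      refine ⟨s(u, v), ?_, ?_⟩
      · rw [hX, Finset.mem_filter, SimpleGraph.mem_edgeFinset, SimpleGraph.mem_edgeSet]
        refine ⟨huv, ?_⟩
        rw [Sym2.map_pair_eq, hFmem u T hu, hFmem v T' hv]
        simpa using hne
      · rw [Sym2.map_pair_eq, hFmem u T hu, hFmem v T' hv]
  have bound2 : H.edgeFinset.card ≤ X.card :=
    (Finset.card_le_card hHX).trans Finset.card_image_le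
  -- many internal edges
  have bound3 : 3 * P.card ≤ Fs.card := by
    set W : Finset V → Finset (Sym2 V) := fun t => Fs.filter (fun e => ∀ v ∈ e, v ∈ t) with hW
    have hdisj : ∀ t ∈ P, ∀ s ∈ P, t ≠ s → Disjoint (W t) (W s) := by
      intro t ht s hs hne
      rw [Finset.disjoint_left]
      intro e het hes
      induction e using Sym2.ind with
      | _ x y =>
        rw [hW, Finset.mem_filter] at het hes
        have hxt := het.2 x (Sym2.mem_mk_left x y)
        have hxs := hes.2 x (Sym2.mem_mk_left x y)
        exact hne ((hpart x).unique ⟨ht, hxt⟩ ⟨hs, hxs⟩)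
    have hWcard : ∀ t ∈ P, 3 ≤ (W t).card := by
      intro t ht
      obtain ⟨a, b, c, hab, hac, hbc, rfl⟩ := Finset.card_eq_three.mp (hclique t ht).2
      have hadj : ∀ x ∈ ({a, b, c} : Finset V), ∀ y ∈ ({a, b, c} : Finset V), x ≠ y → G.Adj x y :=
        fun x hx y hy hxy => (hclique _ ht).1 (by simpa using hx) (by simpa using hy) hxy
      have hmm : ∀ x ∈ ({a, b, c} : Finset V), ∀ y ∈ ({a, b, c} : Finset V), x ≠ y →
          s(x, y) ∈ W {a, b, c} := by
        intro x hx y hy hxy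
        rw [hW, Finset.mem_filter, hFs, Finset.mem_filter, SimpleGraph.mem_edgeFinset,
          SimpleGraph.mem_edgeSet]
        refine ⟨⟨hadj x hx y hy hxy, ?_⟩, ?_⟩
        · rw [Sym2.map_pair_eq, Sym2.isDiag_iff_proj_eq]
          have h1 : f x = {a, b, c} := (huniq ht (by simpa using hx)).symm
          have h2 : f y = {a, b, c} := (huniq ht (by simpa using hy)).symm
          simp [hF, h1, h2]
        · intro v hv
          rcases Sym2.mem_iff.mp hv with rfl | rfl
          · exact hx
          · exact hy
      have hsub : ({s(a, b), s(a, c), s(b, c)} : Finset (Sym2 V)) ⊆ W {a, b, c} := by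
        intro e he
        simp only [Finset.mem_insert, Finset.mem_singleton] at he
        rcases he with rfl | rfl | rfl
        · exact hmm a (by simp) b (by simp) hab
        · exact hmm a (by simp) c (by simp) hac
        · exact hmm b (by simp) c (by simp) hbc
      have h3 : ({s(a, b), s(a, c), s(b, c)} : Finset (Sym2 V)).card = 3 := by
        rw [Finset.card_insert_of_notMem, Finset.card_insert_of_notMem,
          Finset.card_singleton]
        · simp only [Finset.mem_singleton, Sym2.eq_iff]
          tauto
        · simp only [Finset.mem_insert, Finset.mem_singleton, Sym2.eq_iff]
          tauto
      calc 3 = ({s(a, b), s(a, c), s(b, c)} : Finset (Sym2 V)).card := h3.symm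
        _ ≤ (W {a, b, c}).card := Finset.card_le_card hsub
    have hbu : P.biUnion W ⊆ Fs := by
      intro e he
      rw [Finset.mem_biUnion] at he
      obtain ⟨t, -, het⟩ := he
      exact (Finset.mem_filter.mp het).1
    calc 3 * P.card = ∑ _t ∈ P, 3 := by rw [Finset.sum_const, smul_eq_mul]; ring
      _ ≤ ∑ t ∈ P, (W t).card := Finset.sum_le_sum hWcard
      _ = (P.biUnion W).card := (Finset.card_biUnion hdisj).symm
      _ ≤ Fs.card := Finset.card_le_card hbu
  omega


lemma conn_delete' {V : Type*} (G : SimpleGraph V) (hc : G.Connected) {u v w : V}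
    (huv : G.Adj u v) (huw : G.Adj u w) (hwv : G.Adj w v) :
    (G.deleteEdges {s(u, v)}).Connected := by
  set G' := G.deleteEdges {s(u, v)} with hG'
  have hne_uv : u ≠ v := huv.ne
  have hne_wv : w ≠ v := hwv.ne
  have hne_uw : u ≠ w := huw.ne
  have hG'uw : G'.Adj u w := by
    rw [hG', SimpleGraph.deleteEdges_adj]
    refine ⟨huw, ?_⟩
    simp only [Set.mem_singleton_iff, Sym2.eq_iff]
    tauto
  have hG'wv : G'.Adj w v := by
    rw [hG', SimpleGraph.deleteEdges_adj]
    refine ⟨hwv, ?_⟩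
    simp only [Set.mem_singleton_iff, Sym2.eq_iff]
    tauto
  have hstep : ∀ a b : V, G.Adj a b → G'.Reachable a b := by
    intro a b hab
    by_cases h : s(a, b) = s(u, v)
    · rw [Sym2.eq_iff] at h
      rcases h with ⟨rfl, rfl⟩ | ⟨rfl, rfl⟩
      · exact hG'uw.reachable.trans hG'wv.reachable
      · exact (hG'uw.reachable.trans hG'wv.reachable).symm
    · exact SimpleGraph.Adj.reachable (by rw [hG', SimpleGraph.deleteEdges_adj]; exact ⟨hab, by simpa using h⟩)
  haveI : Nonempty V := hc.nonempty
  refine SimpleGraph.Connected.mk fun a b => ?_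
  obtain ⟨p⟩ := hc a b
  induction p with
  | nil => exact Reachable.refl _
  | cons ha q ih => exact (hstep _ _ ha).trans ih

theorem stmt2 {V : Type*} [Fintype V] [DecidableEq V] (G : SimpleGraph V) [DecidableRel G.Adj]
    (n₀ : ℕ) (hn : Fintype.card V = n₀) (hconn : G.Connected)
    (hE : 3 * G.edgeFinset.card + 3 = 4 * n₀)
    (P Q : Finset (Finset V)) (hP : IsTriangleFactor G P) (hQ : IsTriangleFactor G Q) :
    P = Q := by
  classical
  obtain ⟨hPclique, hPpart⟩ := hP
  obtain ⟨hQclique, hQpart⟩ := hQ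
  choose f hfP hfv using fun v => (hPpart v).exists
  have huniq : ∀ {v : V} {t : Finset V}, t ∈ P → v ∈ t → t = f v :=
    fun {v t} ht hv => (hPpart v).unique ⟨ht, hv⟩ ⟨hfP v, hfv v⟩
  have h3P : 3 * P.card = n₀ := by
    rw [← hn]; exact factor_card' P (fun t ht => (hPclique t ht).2) hPpart
  have h3Q : 3 * Q.card = n₀ := by
    rw [← hn]; exact factor_card' Q (fun t ht => (hQclique t ht).2) hQpart
  have hcase : ∀ x y z : V, G.Adj x y → G.Adj x z → G.Adj z y → f x ≠ f y → False := by
    intro x y z hxy hxz hzy hfxy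
    set G' := G.deleteEdges {s(x, y)} with hG'
    have hconn' : G'.Connected := conn_delete' G hconn hxy hxz hzy
    have hclique' : ∀ t' ∈ P, G'.IsNClique 3 t' := by
      intro t' ht'
      refine ⟨?_, (hPclique t' ht').2⟩
      intro p hp q hq hpq
      rw [hG', SimpleGraph.deleteEdges_adj]
      refine ⟨(hPclique t' ht').1 hp hq hpq, ?_⟩
      simp only [Set.mem_singleton_iff, Sym2.eq_iff]
      rintro (⟨h1, h2⟩ | ⟨h1, h2⟩)
      · rw [← h1, ← h2] at hfxy
        exact hfxy (((huniq ht' hp).symm).trans (huniq ht' hq))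
      · rw [← h1, ← h2] at hfxy
        exact hfxy (((huniq ht' hq).symm).trans (huniq ht' hp))
    have hkey := key_count' G' hconn' P hclique' hPpart
    have hmemE : s(x, y) ∈ G.edgeFinset := by simpa using hxy
    have hEd : G'.edgeFinset = G.edgeFinset \ {s(x, y)} := by
      ext e
      simp [hG', SimpleGraph.edgeSet_deleteEdges]
    have hcard' : G'.edgeFinset.card + 1 = G.edgeFinset.card := by
      rw [hEd, Finset.card_sdiff_of_subset (by simpa using hmemE), Finset.card_singleton]
      have : 1 ≤ G.edgeFinset.card := Finset.card_pos.mpr ⟨_, hmemE⟩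
      omega
    omega
  have hsub : Q ⊆ P := by
    intro t htQ
    obtain ⟨a, b, c, hab, hac, hbc, rfl⟩ := Finset.card_eq_three.mp (hQclique t htQ).2
    have hadjab : G.Adj a b := (hQclique _ htQ).1 (by simp) (by simp) hab
    have hadjac : G.Adj a c := (hQclique _ htQ).1 (by simp) (by simp) hac
    have hadjbc : G.Adj b c := (hQclique _ htQ).1 (by simp) (by simp) hbc
    by_cases h1 : f a = f b
    · by_cases h2 : f a = f c
      · have hsubt : ({a, b, c} : Finset V) ⊆ f a := by
          intro x hx
          simp only [Finset.mem_insert, Finset.mem_singleton] at hx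
          rcases hx with rfl | rfl | rfl
          · exact hfv x
          · rw [h1]; exact hfv x
          · rw [h2]; exact hfv x
        have hcards : (f a).card ≤ ({a, b, c} : Finset V).card := by
          rw [(hQclique _ htQ).2, (hPclique _ (hfP a)).2]
        rw [Finset.eq_of_subset_of_card_le hsubt hcards]
        exact hfP a
      · exact (hcase a c b hadjac hadjab hadjbc h2).elim
    · exact (hcase a b c hadjab hadjac hadjbc.symm h1).elim
  exact (Finset.eq_of_subset_of_card_le hsub (by omega)).symm
end

section
/- Let G be a graph containing no cycle of length ≥ 4. Let D₁, …, D_s (s ≥ 2) be disjoint subsets of V(G), and let I be the auxiliary graph on {D₁, …, D_s} with Dⱼ ~ D_k iff some edge of G joins Dⱼ to D_k. Suppose S is a set of edges of G, each with endpoints in distinct sets Dⱼ, such that any three distinct edges of S have at least four distinct endpoints in total. If the auxiliary graph I restricted to edges realized by S contains a cycle, then G contains a cycle of length at least 4 (contradiction); hence such a configuration is impossible. -/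
/-!
Lift the cycle of `I` to `G`: realize each of its edges by an edge of `S`, and join consecutive
endpoints by paths inside the connected parts `Dⱼ`. Disjointness of the parts makes the result a
cycle of `G`, at least as long as the cycle of `I`, hence of length at least `3`. As `G` has no
cycle of length `≥ 4`, it is a triangle whose three edges all lie in `S`; but three edges of a
triangle have only three endpoints.
-/

open SimpleGraph Finset

namespace SimpleGraph

variable {V : Type*} {G : SimpleGraph V}

lemma exists_isPath_forall_mem_support_of_connected_induce {s : Set V}
    (hs : (G.induce s).Connected) {x y : V} (hx : x ∈ s) (hy : y ∈ s) :
    ∃ p : G.Walk x y, p.IsPath ∧ ∀ v ∈ p.support, v ∈ s := by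
  obtain ⟨p, hp⟩ := (hs ⟨x, hx⟩ ⟨y, hy⟩).exists_isPath
  refine ⟨p.map (Embedding.induce s).toHom, hp.map Subtype.val_injective, ?_⟩
  intro v hv
  obtain ⟨v, -, rfl⟩ := List.mem_map.mp (Walk.support_map _ _ ▸ hv)
  exact v.2

namespace Walk

lemma card_filter_exists_mem_edges_le_length [Fintype V] [DecidableEq V] {u : V}
    (c : G.Walk u u) : #{v | ∃ e ∈ c.edges, v ∈ e} ≤ c.length := by
  calc #{v | ∃ e ∈ c.edges, v ∈ e} ≤ #c.support.tail.toFinset := card_le_card ?_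
    _ ≤ c.support.tail.length := List.toFinset_card_le _
    _ = c.length := by simp
  intro v hv
  obtain ⟨e, he, hve⟩ := (mem_filter.mp hv).2
  obtain ⟨w, rfl⟩ := Sym2.mem_iff_exists.mp hve
  have hnil : ¬ c.Nil := fun h => by simp [h.eq_nil] at he
  rw [List.mem_toFinset]
  rcases List.mem_cons.mp (c.cons_tail_support ▸ c.fst_mem_support_of_mem_edges he) with rfl | h
  · exact c.end_mem_tail_support hnil
  · exact h

lemma IsTrail.exists_edges_eq_of_length_eq_three [Fintype V] [DecidableEq V] {u : V}
    {c : G.Walk u u} (hc : c.IsTrail) (h3 : c.length = 3) :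
    ∃ e₁ e₂ e₃, c.edges = [e₁, e₂, e₃] ∧ e₁ ≠ e₂ ∧ e₁ ≠ e₃ ∧ e₂ ≠ e₃ ∧
      #{v | v ∈ e₁ ∨ v ∈ e₂ ∨ v ∈ e₃} ≤ 3 := by
  obtain ⟨e₁, e₂, e₃, hce⟩ := List.length_eq_three.mp (c.length_edges.trans h3)
  have hnd := hc.edges_nodup
  have hcard := c.card_filter_exists_mem_edges_le_length
  rw [hce] at hnd hcard
  simp only [List.nodup_cons, List.mem_cons, List.not_mem_nil, not_or] at hnd
  simp only [List.mem_cons, List.not_mem_nil, or_false, exists_eq_or_imp, exists_eq_left] at hcard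
  exact ⟨e₁, e₂, e₃, hce, hnd.1.1, hnd.1.2.1, hnd.2.1.1, h3 ▸ hcard⟩

end Walk

section Lift

variable {ι : Type*} {D : ι → Set V} {S : Set (Sym2 V)} {I : SimpleGraph ι}

theorem Walk.IsPath.exists_lift (hS : S ⊆ G.edgeSet)
    (hdisj : Pairwise fun i k => Disjoint (D i) (D k)) (hD : ∀ i, (G.induce (D i)).Connected)
    (hI : ∀ i k, I.Adj i k → ∃ x ∈ D i, ∃ y ∈ D k, s(x, y) ∈ S)
    {a b : ι} {q : I.Walk a b} (hq : q.IsPath) {x y : V} (hx : x ∈ D a) (hy : y ∈ D b) :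
    ∃ w : G.Walk x y, w.IsPath ∧ (∀ v ∈ w.support, ∃ i ∈ q.support, v ∈ D i) ∧
      ∃ l, List.Sublist l w.edges ∧ l.length = q.length ∧ ∀ e ∈ l, e ∈ S := by
  induction q generalizing x with
  | nil =>
    obtain ⟨w, hw, hwD⟩ := exists_isPath_forall_mem_support_of_connected_induce (hD _) hx hy
    exact ⟨w, hw, fun v hv => ⟨_, by simp, hwD v hv⟩, [], List.nil_sublist _, rfl, by simp⟩
  | @cons a a' b hab q ih =>
    obtain ⟨hq, ha⟩ := (Walk.cons_isPath_iff _ _).mp hq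
    obtain ⟨u, hu, v, hv, huv⟩ := hI a a' hab
    have huv' : G.Adj u v := hS huv
    obtain ⟨w, hw, hwD, l, hl, hlen, hlS⟩ := ih hq hv hy
    obtain ⟨r, hr, hrD⟩ := exists_isPath_forall_mem_support_of_connected_induce (hD a) hx hu
    have hw_notMem : ∀ z ∈ w.support, z ∉ D a := by
      intro z hz hza
      obtain ⟨i, hi, hzi⟩ := hwD z hz
      exact Set.disjoint_left.mp (hdisj fun hia : i = a => ha (hia ▸ hi)) hzi hza
    refine ⟨r.append (.cons huv' w), ?_, ?_, s(u, v) :: l, ?_, by simp [hlen], ?_⟩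
    · rw [Walk.isPath_def, Walk.support_append, Walk.support_cons, List.tail_cons]
      exact List.nodup_append.mpr ⟨hr.support_nodup, hw.support_nodup,
        fun z hz z' hz' hzz' => hw_notMem z' hz' (hzz' ▸ hrD z hz)⟩
    · intro z hz
      rw [Walk.mem_support_append_iff, Walk.support_cons, List.mem_cons] at hz
      rcases hz with hz | rfl | hz
      · exact ⟨a, by simp, hrD z hz⟩
      · exact ⟨a, by simp, hu⟩
      · obtain ⟨i, hi, hzi⟩ := hwD z hz
        exact ⟨i, by simp [hi], hzi⟩
    · rw [Walk.edges_append, Walk.edges_cons]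
      exact hl.cons_cons _ |>.trans (List.sublist_append_right _ _)
    · simpa [huv] using hlS

theorem Walk.IsCycle.exists_lift (hS : S ⊆ G.edgeSet)
    (hdisj : Pairwise fun i k => Disjoint (D i) (D k)) (hD : ∀ i, (G.induce (D i)).Connected)
    (hI : ∀ i k, I.Adj i k → ∃ x ∈ D i, ∃ y ∈ D k, s(x, y) ∈ S)
    {a : ι} {c : I.Walk a a} (hc : c.IsCycle) :
    ∃ (x : V) (C : G.Walk x x), C.IsCycle ∧
      ∃ l, List.Sublist l C.edges ∧ l.length = c.length ∧ ∀ e ∈ l, e ∈ S := by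
  obtain _ | ⟨hab, q⟩ := c
  · exact absurd hc Walk.not_isCycle_nil
  have hq2 : 2 ≤ q.length := by simpa using hc.three_le_length
  obtain ⟨x, hx, y, hy, hxy⟩ := hI _ _ hab
  have hxy' : G.Adj x y := hS hxy
  obtain ⟨w, hw, -, l, hl, hlen, hlS⟩ :=
    ((Walk.cons_isCycle_iff _ _).mp hc).1.exists_lift hS hdisj hD hI hy hx
  have hlw : l.length ≤ w.length := w.length_edges ▸ hl.length_le
  refine ⟨x, .cons hxy' w, (Walk.cons_isCycle_iff _ _).mpr ⟨hw, fun h => ?_⟩, s(x, y) :: l,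
    ?_, by simp [hlen], by simpa [hxy] using hlS⟩
  · have := hw.length_eq_one_of_mem_edges (Sym2.eq_swap ▸ h)
    omega
  · rw [Walk.edges_cons]
    exact hl.cons_cons _

end Lift

end SimpleGraph

theorem stmt8_general {V : Type*} [Fintype V] [DecidableEq V] (G : SimpleGraph V) [DecidableRel G.Adj]
    (hno4 : ∀ (v : V) (c : G.Walk v v), c.IsCycle → c.length ≤ 3)
    (m : ℕ) (D : Fin m → Finset V)
    (hdisj : ∀ j k, j ≠ k → Disjoint (D j) (D k))
    (hDconn : ∀ j, (G.induce ((D j) : Set V)).Connected)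
    (S : Finset (Sym2 V)) (hS : S ⊆ G.edgeFinset)
    (h3 : ∀ e₁ ∈ S, ∀ e₂ ∈ S, ∀ e₃ ∈ S, e₁ ≠ e₂ → e₁ ≠ e₃ → e₂ ≠ e₃ →
      4 ≤ (Finset.univ.filter (fun v : V => v ∈ e₁ ∨ v ∈ e₂ ∨ v ∈ e₃)).card)
    (I : SimpleGraph (Fin m))
    (hI : I = SimpleGraph.fromRel (fun j k => ∃ e ∈ S, ∃ x ∈ D j, ∃ y ∈ D k, e = s(x, y)))
    (hcyc : ∃ (j : Fin m) (c : I.Walk j j), c.IsCycle) :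
    False := by
  have hSG : (S : Set (Sym2 V)) ⊆ G.edgeSet := fun e he => mem_edgeFinset.mp (hS he)
  have hIS : ∀ i k, I.Adj i k → ∃ x ∈ D i, ∃ y ∈ D k, s(x, y) ∈ S := by
    intro i k hik
    rw [hI, fromRel_adj] at hik
    obtain ⟨-, ⟨e, he, x, hx, y, hy, rfl⟩ | ⟨e, he, y, hy, x, hx, rfl⟩⟩ := hik
    · exact ⟨x, hx, y, hy, he⟩
    · exact ⟨x, hx, y, hy, Sym2.eq_swap ▸ he⟩
  obtain ⟨j, c, hc⟩ := hcyc
  obtain ⟨x, C, hC, l, hl, hlen, hlS⟩ := hc.exists_lift hSG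
    (fun i k hik => Finset.disjoint_coe.mpr (hdisj i k hik)) hDconn hIS
  have hC3 : C.length = 3 := le_antisymm (hno4 x C hC) hC.three_le_length
  have hlC : l = C.edges := by
    refine hl.eq_of_length (le_antisymm hl.length_le ?_)
    rw [hlen, C.length_edges, hC3]
    exact hc.three_le_length
  obtain ⟨e₁, e₂, e₃, hCe, h12, h13, h23, hcard⟩ :=
    hC.isTrail.exists_edges_eq_of_length_eq_three hC3
  rw [hlC, hCe] at hlS
  have := h3 e₁ (hlS _ (by simp)) e₂ (hlS _ (by simp)) e₃ (hlS _ (by simp)) h12 h13 h23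
  omega

theorem stmt8 {V : Type*} [Fintype V] [DecidableEq V] (G : SimpleGraph V) [DecidableRel G.Adj]
    (hno4 : ∀ (v : V) (c : G.Walk v v), c.IsCycle → c.length ≤ 3)
    (m : ℕ) (hm : 2 ≤ m) (D : Fin m → Finset V)
    (hdisj : ∀ j k, j ≠ k → Disjoint (D j) (D k))
    (hDconn : ∀ j, (G.induce ((D j) : Set V)).Connected)
    (S : Finset (Sym2 V)) (hS : S ⊆ G.edgeFinset)
    (hScross : ∀ e ∈ S, ∃ j k, j ≠ k ∧ ∃ x ∈ D j, ∃ y ∈ D k, e = s(x, y))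
    (h3 : ∀ e₁ ∈ S, ∀ e₂ ∈ S, ∀ e₃ ∈ S, e₁ ≠ e₂ → e₁ ≠ e₃ → e₂ ≠ e₃ →
      4 ≤ (Finset.univ.filter (fun v : V => v ∈ e₁ ∨ v ∈ e₂ ∨ v ∈ e₃)).card)
    (I : SimpleGraph (Fin m))
    (hI : I = SimpleGraph.fromRel (fun j k => ∃ e ∈ S, ∃ x ∈ D j, ∃ y ∈ D k, e = s(x, y)))
    (hcyc : ∃ (j : Fin m) (c : I.Walk j j), c.IsCycle) :
    False :=
  stmt8_general G hno4 m D hdisj hDconn S hS h3 I hI hcyc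
end

section
/- Let S₀ be a finite set of edges (pairs of vertices) of a graph. Repeatedly remove from the current set any edge ab such that the set still contains an edge ab′ with b′ ≠ b and an edge a′b with a′ ≠ a, until no such edge exists; call the result S. Then any three distinct edges of S have at least four distinct endpoints in total. -/
open Finset

theorem stmt9 {V : Type*} [DecidableEq V]
    (Step : Finset (Sym2 V) → Finset (Sym2 V) → Prop)
    (hStep : ∀ A B, Step A B ↔ ∃ a b : V, s(a, b) ∈ A ∧
      (∃ b', b' ≠ b ∧ s(a, b') ∈ A) ∧ (∃ a', a' ≠ a ∧ s(a', b) ∈ A) ∧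
      B = A.erase s(a, b))
    (S₀ S : Finset (Sym2 V)) (hdiag : ∀ e ∈ S₀, ¬ e.IsDiag)
    (hreach : Relation.ReflTransGen Step S₀ S)
    (hterm : ∀ B, ¬ Step S B)
    (e₁ e₂ e₃ : Sym2 V) (h₁ : e₁ ∈ S) (h₂ : e₂ ∈ S) (h₃ : e₃ ∈ S)
    (h12 : e₁ ≠ e₂) (h13 : e₁ ≠ e₃) (h23 : e₂ ≠ e₃) :
    4 ≤ ({x : V | x ∈ e₁ ∨ x ∈ e₂ ∨ x ∈ e₃} : Set V).ncard := by
  -- S ⊆ S₀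
  have hsub : S ⊆ S₀ := by
    clear h₁ h₂ h₃ hterm
    induction hreach with
    | refl => exact Finset.Subset.refl _
    | tail hbc hs ih =>
      obtain ⟨a, b, _, _, _, rfl⟩ := (hStep _ _).mp hs
      exact (Finset.erase_subset _ _).trans ih
  have hdiagS : ∀ e ∈ S, ¬ e.IsDiag := fun e he => hdiag e (hsub he)
  -- each edge has an exclusive endpoint
  have key : ∀ e ∈ S, ∃ v ∈ e, ∀ f ∈ S, v ∈ f → f = e := by
    intro e he
    obtain ⟨a, b, rfl⟩ : ∃ a b, e = s(a, b) :=
      e.inductionOn fun a b => ⟨a, b, rfl⟩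
    have hab : a ≠ b := by
      intro h; exact hdiagS _ he (by simp [h])
    have hT := hterm (S.erase s(a, b))
    rw [hStep] at hT
    push_neg at hT
    have hT' := hT a b he
    have hcase : (¬ ∃ b', b' ≠ b ∧ s(a, b') ∈ S) ∨ (¬ ∃ a', a' ≠ a ∧ s(a', b) ∈ S) := by
      by_contra hc
      push_neg at hc
      exact hT' hc.1 hc.2 rfl
    rcases hcase with hC | hC
    · refine ⟨a, by simp, fun f hf haf => ?_⟩
      obtain ⟨c, rfl⟩ : ∃ c, f = s(a, c) := by
        have := Sym2.mem_iff_exists.mp haf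
        obtain ⟨c, rfl⟩ := this
        exact ⟨c, rfl⟩
      by_contra hne
      have hcb : c ≠ b := by
        rintro rfl; exact hne rfl
      exact hC ⟨c, hcb, hf⟩
    · refine ⟨b, by simp, fun f hf hbf => ?_⟩
      obtain ⟨c, rfl⟩ : ∃ c, f = s(c, b) := by
        obtain ⟨c, rfl⟩ := Sym2.mem_iff_exists.mp hbf
        exact ⟨c, Sym2.eq_swap⟩
      by_contra hne
      have hca : c ≠ a := by
        rintro rfl; exact hne rfl
      exact hC ⟨c, hca, hf⟩
  obtain ⟨v, hv₁, hvexcl⟩ := key e₁ h₁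
  have hv2 : v ∉ e₂ := fun h => h12 ((hvexcl e₂ h₂ h).symm ▸ rfl)
  have hv3 : v ∉ e₃ := fun h => h13 ((hvexcl e₃ h₃ h).symm ▸ rfl)
  obtain ⟨a₂, b₂, rfl⟩ : ∃ a b, e₂ = s(a, b) := e₂.inductionOn fun a b => ⟨a, b, rfl⟩
  obtain ⟨a₃, b₃, rfl⟩ : ∃ a b, e₃ = s(a, b) := e₃.inductionOn fun a b => ⟨a, b, rfl⟩
  have hab2 : a₂ ≠ b₂ := fun h => hdiagS _ h₂ (by simp [h])
  have hab3 : a₃ ≠ b₃ := fun h => hdiagS _ h₃ (by simp [h])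
  -- a vertex of e₃ not in e₂
  have hx : ∃ x, x ∈ s(a₃, b₃) ∧ x ∉ s(a₂, b₂) := by
    by_contra hc
    push_neg at hc
    have h3a := hc a₃ (by simp)
    have h3b := hc b₃ (by simp)
    rw [Sym2.mem_iff] at h3a h3b
    apply h23
    rcases h3a with rfl | rfl <;> rcases h3b with rfl | rfl
    · exact absurd rfl hab3
    · rfl
    · exact Sym2.eq_swap
    · exact absurd rfl hab3
  obtain ⟨x, hx3, hx2⟩ := hx
  have hva : v ≠ a₂ := fun h => hv2 (by simp [h])
  have hvb : v ≠ b₂ := fun h => hv2 (by simp [h])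
  have hvx : v ≠ x := fun h => hv3 (h ▸ hx3)
  have hxa : x ≠ a₂ := fun h => hx2 (by simp [h])
  have hxb : x ≠ b₂ := fun h => hx2 (by simp [h])
  have hcard : ({v, a₂, b₂, x} : Finset V).card = 4 := by
    rw [Finset.card_insert_of_notMem (by simp [hva, hvb, hvx]),
      Finset.card_insert_of_notMem (by simp [hab2, hxa.symm]),
      Finset.card_insert_of_notMem (by simp [hxb.symm]),
      Finset.card_singleton]
  have hsubset : (↑({v, a₂, b₂, x} : Finset V) : Set V) ⊆
      {x : V | x ∈ e₁ ∨ x ∈ s(a₂, b₂) ∨ x ∈ s(a₃, b₃)} := by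
    intro y hy
    simp only [Finset.coe_insert, Finset.coe_singleton, Set.mem_insert_iff,
      Set.mem_singleton_iff] at hy
    rcases hy with rfl | rfl | rfl | rfl
    · exact Or.inl hv₁
    · exact Or.inr (Or.inl (by simp))
    · exact Or.inr (Or.inl (by simp))
    · exact Or.inr (Or.inr hx3)
  have hfin : ({x : V | x ∈ e₁ ∨ x ∈ s(a₂, b₂) ∨ x ∈ s(a₃, b₃)} : Set V).Finite := by
    obtain ⟨a₁, b₁, rfl⟩ : ∃ a b, e₁ = s(a, b) := e₁.inductionOn fun a b => ⟨a, b, rfl⟩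
    apply Set.Finite.subset (({a₁, b₁, a₂, b₂, a₃, b₃} : Finset V) : Set V).toFinite
    intro y hy
    simp only [Set.mem_setOf_eq, Sym2.mem_iff] at hy
    simp only [Finset.coe_insert, Finset.coe_singleton, Set.mem_insert_iff,
      Set.mem_singleton_iff]
    tauto
  calc 4 = (↑({v, a₂, b₂, x} : Finset V) : Set V).ncard := by
        rw [Set.ncard_coe_finset, hcard]
    _ ≤ _ := Set.ncard_le_ncard hsubset hfin
end

section
/- Let G be a connected graph on n₀ vertices, 3 | n₀, such that G has no triangle-factor but adding a single edge e (with endpoints in V(G)) yields a graph with a triangle-factor and exactly (4/3)·n₀ − 1 edges. Then exactly three vertices of G lie in no triangle of G. -/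
/-!
Let `H = G ⊔ edge a b` and let `P` be a triangle factor of `H`, with `k = n₀ / 3` triangles.
Contracting every triangle of `P` to a point maps the connected graph `H` onto a connected graph
on `k` vertices whose edges are the images of the edges of `H` joining different triangles.
The triangles of `P` carry `3k` of the `4k - 1` edges of `H`, so only `k - 1` edges join
different triangles: the contraction is a tree, and distinct such edges have distinct images.
Hence every triangle of `H` belongs to `P` (one meeting two parts would give two edges with the
same image, one meeting three parts a triangle in the tree), and `a, b` lie in a common
triangle `t₀` of `P` (otherwise the image of `ab` would be a bridge of the tree, although
`G = H - ab` is connected). The vertices of `G` lying in no triangle of `G` are then exactly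
those of `t₀`.
-/

open SimpleGraph Finset

namespace SimpleGraph

variable {V W : Type*} {G H : SimpleGraph V} {f : V → W}

theorem Reachable.to_map (f : V → W) {u v : V} (h : G.Reachable u v) :
    (G.map f).Reachable (f u) (f v) := by
  obtain ⟨p⟩ := h
  induction p with
  | nil => rfl
  | @cons x y _ hxy _ ih =>
    refine Reachable.trans ?_ ih
    by_cases hf : f x = f y
    · rw [hf]
    · exact (map_adj_apply' hxy hf).reachable

theorem Connected.map_of_surjective (hf : f.Surjective) (hG : G.Connected) :
    (G.map f).Connected := by
  have := hG.nonempty.map f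
  refine ⟨fun x y => ?_⟩
  obtain ⟨u, rfl⟩ := hf x
  obtain ⟨v, rfl⟩ := hf y
  exact (hG u v).to_map f

def crossEdgeSet (G : SimpleGraph V) (f : V → W) : Set (Sym2 V) :=
  {e ∈ G.edgeSet | ¬(e.map f).IsDiag}

@[simp]
theorem mk_mem_crossEdgeSet {x y : V} : s(x, y) ∈ G.crossEdgeSet f ↔ G.Adj x y ∧ f x ≠ f y :=
  Iff.rfl

theorem edgeSet_map_eq_image (f : V → W) (G : SimpleGraph V) :
    (G.map f).edgeSet = Sym2.map f '' G.crossEdgeSet f := by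
  ext e
  induction e with
  | _ x y =>
  simp only [mem_edgeSet, map_adj', Set.mem_image, Sym2.exists, mk_mem_crossEdgeSet, Sym2.map_mk]
  constructor
  · rintro ⟨hne, u, v, huv, rfl, rfl⟩
    exact ⟨u, v, ⟨huv, hne⟩, rfl⟩
  · rintro ⟨u, v, ⟨huv, hne⟩, he⟩
    rcases Sym2.eq_iff.mp he with ⟨rfl, rfl⟩ | ⟨rfl, rfl⟩
    · exact ⟨hne, u, v, huv, rfl, rfl⟩
    · exact ⟨Ne.symm hne, v, u, huv.symm, rfl, rfl⟩

theorem Connected.isTree_map_and_injOn [Finite V] (hG : G.Connected) (hf : f.Surjective)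
    (hcard : (G.crossEdgeSet f).ncard + 1 ≤ Nat.card W) :
    (G.map f).IsTree ∧ Set.InjOn (Sym2.map f) (G.crossEdgeSet f) := by
  have := Finite.of_surjective f hf
  have hconn := hG.map_of_surjective hf
  have hlow := hconn.card_vert_le_card_edgeSet_add_one
  have hup : (G.map f).edgeSet.ncard ≤ (G.crossEdgeSet f).ncard := by
    rw [edgeSet_map_eq_image]
    exact Set.ncard_image_le
  rw [← Nat.card_coe_set_eq] at hup
  refine ⟨isTree_iff_connected_and_card.mpr ⟨hconn, by omega⟩, Set.injOn_of_ncard_image_eq ?_⟩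
  rw [← edgeSet_map_eq_image, ← Nat.card_coe_set_eq]
  omega

/-- `((⊤ : SimpleGraph W).comap f)ᶜ` joins distinct vertices in the same fibre of `f`. -/
theorem two_mul_ncard_edgeSet_compl_comap_top [Fintype V] [DecidableEq V] [DecidableEq W]
    {f : V → W} {r : ℕ} (hf : ∀ v, #{w | f w = f v} = r) :
    2 * ((⊤ : SimpleGraph W).comap f)ᶜ.edgeSet.ncard = Fintype.card V * (r - 1) := by
  have hdeg (v : V) : ((⊤ : SimpleGraph W).comap f)ᶜ.degree v = r - 1 := by
    rw [← card_neighborFinset_eq_degree, ← hf v, ← card_erase_of_mem (by simp : v ∈ _)]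
    congr 1
    ext w
    simp [eq_comm, and_comm]
  rw [← coe_edgeFinset, Set.ncard_coe_finset, ← sum_degrees_eq_twice_card_edges]
  simp [hdeg]

section AcyclicContraction

variable (hT : (H.map f).IsAcyclic) (hinj : Set.InjOn (Sym2.map f) (H.crossEdgeSet f))
include hT hinj

theorem apply_eq_of_connected_le_of_not_adj {a b : V} (hG : G.Connected) (hGH : G ≤ H)
    (hab : H.Adj a b) (hnab : ¬G.Adj a b) : f a = f b := by
  by_contra hne
  have hbridge := isAcyclic_iff_forall_adj_isBridge.mp hT (map_adj_apply' hab hne)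
  refine isBridge_iff.mp hbridge ((Reachable.to_map f (hG a b)).mono ?_)
  rintro _ _ ⟨hxy, x, y, hG', rfl, rfl⟩
  refine deleteEdges_adj.mpr ⟨map_adj_apply' (hGH hG') hxy, fun he => ?_⟩
  rcases Sym2.eq_iff.mp (hinj (mk_mem_crossEdgeSet.mpr ⟨hGH hG', hxy⟩)
    (mk_mem_crossEdgeSet.mpr ⟨hab, hne⟩) he) with ⟨rfl, rfl⟩ | ⟨rfl, rfl⟩
  · exact hnab hG'
  · exact hnab hG'.symm

theorem apply_eq_of_adj_of_adj_of_adj {x y z : V} (hxy : H.Adj x y) (hyz : H.Adj y z)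
    (hxz : H.Adj x z) : f x = f y := by
  by_contra hfxy
  by_cases hfyz : f y = f z
  · have := hinj (mk_mem_crossEdgeSet.mpr ⟨hxy, hfxy⟩)
      (mk_mem_crossEdgeSet.mpr ⟨hxz, hfyz ▸ hfxy⟩) (by simp [hfyz])
    exact hyz.ne (Sym2.congr_right.mp this)
  by_cases hfxz : f x = f z
  · have := hinj (mk_mem_crossEdgeSet.mpr ⟨hxy.symm, Ne.symm hfxy⟩)
      (mk_mem_crossEdgeSet.mpr ⟨hyz, hfxz ▸ Ne.symm hfxy⟩) (by simp [hfxz])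
    exact hxz.ne (Sym2.congr_right.mp this)
  have hbridge := isAcyclic_iff_forall_adj_isBridge.mp hT (map_adj_apply' hxy hfxy)
  refine isBridge_iff.mp hbridge (Reachable.trans (v := f z) (Adj.reachable ?_) (Adj.reachable ?_))
  · exact deleteEdges_adj.mpr ⟨map_adj_apply' hxz hfxz, by grind⟩
  · exact deleteEdges_adj.mpr ⟨map_adj_apply' hyz.symm (Ne.symm hfyz), by grind⟩

end AcyclicContraction

end SimpleGraph

namespace IsTriangleFactor

variable {V : Type*} [DecidableEq V] {H : SimpleGraph V} {P : Finset (Finset V)}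
  (hP : IsTriangleFactor H P)

noncomputable def part (v : V) : P :=
  ⟨(hP.2 v).exists.choose, (hP.2 v).exists.choose_spec.1⟩

theorem mem_iff_part_eq {v : V} {t : P} : v ∈ (t : Finset V) ↔ hP.part v = t := by
  have hspec := (hP.2 v).exists.choose_spec
  refine ⟨fun hv => Subtype.ext ((hP.2 v).unique hspec ⟨t.2, hv⟩), ?_⟩
  rintro rfl
  exact hspec.2

theorem mem_part (v : V) : v ∈ (hP.part v : Finset V) :=
  (hP.mem_iff_part_eq).mpr rfl

theorem part_surjective : (hP.part).Surjective := by
  intro t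
  obtain ⟨v, hv⟩ := Finset.card_pos.mp ((hP.1 t t.2).card_eq ▸ three_pos)
  exact ⟨v, hP.mem_iff_part_eq.mp hv⟩

theorem mem_of_isNClique (hT : (H.map hP.part).IsAcyclic)
    (hinj : Set.InjOn (Sym2.map hP.part) (H.crossEdgeSet hP.part)) {t : Finset V}
    (ht : H.IsNClique 3 t) : t ∈ P := by
  obtain ⟨x, y, z, hxy, hxz, hyz, rfl⟩ := card_eq_three.mp ht.card_eq
  have hxy' : H.Adj x y := ht.1 (by simp) (by simp) hxy
  have hxz' : H.Adj x z := ht.1 (by simp) (by simp) hxz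
  have hyz' : H.Adj y z := ht.1 (by simp) (by simp) hyz
  have hy := apply_eq_of_adj_of_adj_of_adj hT hinj hxy' hyz' hxz'
  have hz := apply_eq_of_adj_of_adj_of_adj hT hinj hxz' hyz'.symm hxy'
  have hsub : {x, y, z} ⊆ (hP.part x : Finset V) := by
    simp [insert_subset_iff, hP.mem_iff_part_eq, ← hy, ← hz]
  rw [eq_of_subset_of_card_le hsub (by rw [(hP.1 _ (hP.part x).2).card_eq, ht.card_eq])]
  exact (hP.part x).2

variable [Fintype V]

theorem card_filter_part_eq (t : P) : #{v | hP.part v = t} = 3 := by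
  rw [← (hP.1 t t.2).card_eq]
  congr 1
  ext v
  simp [hP.mem_iff_part_eq]

include hP in
theorem card_eq_three_mul_card : Fintype.card V = 3 * #P := by
  rw [← Finset.card_univ, card_eq_sum_card_fiberwise (f := hP.part) (t := univ)
    (fun _ _ => Finset.mem_coe.mpr (mem_univ _))]
  simp [hP.card_filter_part_eq, mul_comm]

theorem ncard_crossEdgeSet_add_card :
    (H.crossEdgeSet hP.part).ncard + Fintype.card V = H.edgeSet.ncard := by
  have hinternal : H.edgeSet ∩ {e | (e.map hP.part).IsDiag} =
      ((⊤ : SimpleGraph P).comap hP.part)ᶜ.edgeSet := by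
    ext e
    induction e with
    | _ x y =>
    simp only [Set.mem_inter_iff, mem_edgeSet, Set.mem_ofPred_eq, Sym2.map_mk, Sym2.mk_isDiag_iff,
      compl_adj, comap_adj, top_adj, not_not]
    refine ⟨fun h => ⟨h.1.ne, h.2⟩, fun h => ⟨?_, h.2⟩⟩
    exact (hP.1 _ (hP.part x).2).1 (hP.mem_part x) (hP.mem_iff_part_eq.mpr h.2.symm) h.1
  have := two_mul_ncard_edgeSet_compl_comap_top fun v => hP.card_filter_part_eq (hP.part v)
  rw [← Set.ncard_inter_add_ncard_sdiff_eq_ncard H.edgeSet {e | (e.map hP.part).IsDiag},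
    hinternal]
  change _ = _ + (H.crossEdgeSet hP.part).ncard
  omega

end IsTriangleFactor

theorem IsTriangleFactor.setOf_not_exists_isNClique_eq {V : Type*} [DecidableEq V]
    {G : SimpleGraph V} {a b : V} {P : Finset (Finset V)} (hP : IsTriangleFactor (G ⊔ edge a b) P)
    (hP₃ : ∀ t, (G ⊔ edge a b).IsNClique 3 t → t ∈ P) (hab : a ≠ b) (hnab : ¬G.Adj a b)
    {t₀ : Finset V} (ht₀ : t₀ ∈ P) (ha : a ∈ t₀) (hb : b ∈ t₀) :
    {v | ¬∃ t, G.IsNClique 3 t ∧ v ∈ t} = t₀ := by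
  ext v
  refine ⟨fun hv => ?_, ?_⟩
  · by_contra hvt₀
    obtain ⟨t, ⟨htP, hvt⟩, -⟩ := hP.2 v
    refine hv ⟨t, ⟨fun x hx y hy hxy => ?_, (hP.1 t htP).card_eq⟩, hvt⟩
    rcases (hP.1 t htP).1 hx hy hxy with hG | hedge
    · exact hG
    have hat : a ∈ t := by
      rcases (edge_adj a b x y).mp hedge with ⟨⟨rfl, -⟩ | ⟨-, rfl⟩, -⟩ <;> assumption
    obtain rfl := (hP.2 a).unique ⟨htP, hat⟩ ⟨ht₀, ha⟩
    exact absurd hvt hvt₀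
  · rintro hvt₀ ⟨t, ht, hvt⟩
    obtain rfl := (hP.2 v).unique ⟨hP₃ t (ht.mono le_sup_left), hvt⟩ ⟨ht₀, hvt₀⟩
    exact hnab (ht.1 ha hb hab)

theorem stmt12_general {V : Type*} [Fintype V] [DecidableEq V] (G : SimpleGraph V) [DecidableRel G.Adj]
    (n₀ : ℕ) (hn : Fintype.card V = n₀) (hconn : G.Connected)
    (a b : V) (hab : a ≠ b) (hnadj : ¬ G.Adj a b)
    (hTF : ∃ P, IsTriangleFactor (G ⊔ SimpleGraph.fromEdgeSet {s(a, b)}) P)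
    (hcount : 3 * (G.edgeFinset.card + 1) + 3 = 4 * n₀) :
    ({v : V | ¬ ∃ t : Finset V, G.IsNClique 3 t ∧ v ∈ t} : Set V).ncard = 3 := by
  obtain ⟨P, hP⟩ : ∃ P, IsTriangleFactor (G ⊔ edge a b) P := hTF
  have hHab : (G ⊔ edge a b).Adj a b := Or.inr ((edge_adj ..).mpr ⟨Or.inl ⟨rfl, rfl⟩, hab⟩)
  have hcross : ((G ⊔ edge a b).crossEdgeSet hP.part).ncard + 1 ≤ Nat.card P := by
    have hedges : (G ⊔ edge a b).edgeSet.ncard = #G.edgeFinset + 1 := by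
      rw [← coe_edgeFinset, Set.ncard_coe_finset, G.card_edgeFinset_sup_edge hnadj hab]
    have := hP.ncard_crossEdgeSet_add_card
    have := hP.card_eq_three_mul_card
    rw [Nat.card_eq_fintype_card, Fintype.card_coe]
    omega
  obtain ⟨htree, hinj⟩ :=
    (hconn.mono le_sup_left).isTree_map_and_injOn hP.part_surjective hcross
  have hpart : hP.part a = hP.part b :=
    apply_eq_of_connected_le_of_not_adj htree.isAcyclic hinj hconn le_sup_left hHab hnadj
  rw [hP.setOf_not_exists_isNClique_eq (fun t ht => hP.mem_of_isNClique htree.isAcyclic hinj ht)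
    hab hnadj (hP.part a).2 (hP.mem_part a) (hP.mem_iff_part_eq.mpr hpart.symm),
    Set.ncard_coe_finset, (hP.1 _ (hP.part a).2).card_eq]

theorem stmt12 {V : Type*} [Fintype V] [DecidableEq V] (G : SimpleGraph V) [DecidableRel G.Adj]
    (n₀ : ℕ) (hn : Fintype.card V = n₀) (h3 : 3 ∣ n₀) (hconn : G.Connected)
    (hnoTF : ¬ ∃ P, IsTriangleFactor G P)
    (a b : V) (hab : a ≠ b) (hnadj : ¬ G.Adj a b)
    (hTF : ∃ P, IsTriangleFactor (G ⊔ SimpleGraph.fromEdgeSet {s(a, b)}) P)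
    (hcount : 3 * (G.edgeFinset.card + 1) + 3 = 4 * n₀) :
    ({v : V | ¬ ∃ t : Finset V, G.IsNClique 3 t ∧ v ∈ t} : Set V).ncard = 3 :=
  stmt12_general G n₀ hn hconn a b hab hnadj hTF hcount
end
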